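/- arXiv:2408.13997 — 3 statements merged into one kernel-verified Lean document; each statement's English description precedes it below -/
import Mathlib

section
/- Let n and m be natural numbers with n + m ≥ 1, and let f₁, …, fₙ and h₁, …, hₘ be holomorphic functions on the open unit disk {z ∈ ℂ : |z| < 1}. If ∑_{j=1}^{n} |f_j(z)|² = ∑_{k=1}^{m} |h_k(z)|² for every z in the open unit disk, then the family of functions f₁, …, fₙ, h₁, …, hₘ, regarded as ℂ-valued functions on the open unit disk, is linearly dependent over ℂ. -/
/-!
Polarization: with `g = (f, h)` and `c = (1, …, 1, -1, …, -1)`, the kernel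
`K(w, z) = ∑ᵢ cᵢ · conj (gᵢ (conj w)) · gᵢ z` is holomorphic in both variables and vanishes on the
totally real set `{(conj z, z)}`. After the linear change of variables taking `ℝ²` onto that set,
the one-variable identity theorem applied in each variable in turn shows that `K` vanishes near
the origin of `ℂ²`. For each small `w` this is a linear relation `∑ᵢ cᵢ conj (gᵢ (conj w)) • gᵢ = 0`
on the disk; linear independence would force every `gᵢ` to vanish near `0`, hence on the whole disk.
-/

open Complex ComplexConjugate Metric Filter Topology Set

theorem eqOn_zero_of_ofReal_eq_zero {F : ℂ → ℂ} {r : ℝ} (hF : DifferentiableOn ℂ F (ball 0 r))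
    (h0 : ∀ x : ℝ, |x| < r → F x = 0) : EqOn F 0 (ball 0 r) := by
  intro z hz
  have hr : 0 < r := pos_of_mem_ball hz
  have hreal : ∃ᶠ x : ℝ in 𝓝[≠] 0, F x = 0 :=
    (eventually_nhdsWithin_of_eventually_nhds
      (eventually_abs_sub_lt 0 hr)).frequently.mono fun x hx => h0 x (by simpa using hx)
  have hofReal : Tendsto ((↑) : ℝ → ℂ) (𝓝[≠] 0) (𝓝[≠] 0) := by
    simpa only [ofReal_zero] using continuous_ofReal.continuousWithinAt.tendsto_nhdsWithin
      (x := 0) (s := {0}ᶜ) (t := {0}ᶜ) fun x hx => ofReal_ne_zero.mpr hx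
  exact (hF.analyticOnNhd isOpen_ball).eqOn_zero_of_preconnected_of_frequently_eq_zero
    (convex_ball 0 r).isPreconnected (mem_ball_self hr) (hofReal.frequently hreal) hz

theorem eqOn_zero_of_ofReal_prod_eq_zero {H : ℂ × ℂ → ℂ} {r : ℝ}
    (hH : DifferentiableOn ℂ H (ball 0 r))
    (h0 : ∀ x y : ℝ, |x| < r → |y| < r → H (x, y) = 0) : EqOn H 0 (ball 0 r) := by
  rw [← Prod.mk_zero_zero, ← ball_prod_same] at hH ⊢
  rintro ⟨z, w⟩ ⟨hz, hw⟩
  have ofReal_mem : ∀ y : ℝ, |y| < r → (y : ℂ) ∈ ball 0 r := fun y hy => by simpa using hy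
  have real_snd (y : ℝ) (hy : |y| < r) : EqOn (fun z => H (z, y)) 0 (ball 0 r) :=
    eqOn_zero_of_ofReal_eq_zero
      (hH.comp (differentiableOn_id.prodMk (differentiableOn_const _))
        fun _ hz => ⟨hz, ofReal_mem y hy⟩)
      fun x hx => h0 x y hx hy
  exact eqOn_zero_of_ofReal_eq_zero
    (hH.comp ((differentiableOn_const _).prodMk differentiableOn_id) fun _ hw => ⟨hz, hw⟩)
    (fun y hy => real_snd y hy hz) hw

theorem eventually_eq_zero_of_ofReal_prod_eq_zero {H : ℂ × ℂ → ℂ}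
    (hH : ∀ᶠ p in 𝓝 0, DifferentiableAt ℂ H p)
    (h0 : ∀ᶠ q : ℝ × ℝ in 𝓝 0, H (q.1, q.2) = 0) : ∀ᶠ p in 𝓝 0, H p = 0 := by
  obtain ⟨r, hr, hHr⟩ := Metric.eventually_nhds_iff_ball.1 hH
  obtain ⟨s, hs, h0s⟩ := Metric.eventually_nhds_iff_ball.1 h0
  refine Metric.eventually_nhds_iff_ball.2 ⟨min r s, lt_min hr hs, ?_⟩
  refine eqOn_zero_of_ofReal_prod_eq_zero
    (fun p hp => (hHr p (ball_subset_ball (min_le_left r s) hp)).differentiableWithinAt) ?_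
  intro x y hx hy
  refine h0s (x, y) ?_
  rw [mem_ball_zero_iff, Prod.norm_def, Real.norm_eq_abs, Real.norm_eq_abs]
  exact max_lt (hx.trans_le (min_le_right r s)) (hy.trans_le (min_le_right r s))

theorem eventually_eq_zero_of_conj_diag_eq_zero {G : ℂ × ℂ → ℂ}
    (hG : ∀ᶠ p in 𝓝 0, DifferentiableAt ℂ G p)
    (h0 : ∀ᶠ z in 𝓝 0, G (conj z, z) = 0) : ∀ᶠ p in 𝓝 0, G p = 0 := by
  -- For real `u, v`, `Φ (u, v) = (conj z, z)` with `z = u + v * I`.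
  set Φ : ℂ × ℂ → ℂ × ℂ := fun q => (q.1 - q.2 * I, q.1 + q.2 * I) with hΦ_def
  have hΦ : Tendsto Φ (𝓝 0) (𝓝 0) := Continuous.tendsto' (by fun_prop) 0 0 (by simp [hΦ_def])
  have hGΦ : ∀ᶠ q in 𝓝 0, G (Φ q) = 0 := by
    refine eventually_eq_zero_of_ofReal_prod_eq_zero ((hΦ.eventually hG).mono fun q hq =>
      hq.comp q (by fun_prop)) ?_
    have hρ : Tendsto (fun q : ℝ × ℝ => (q.1 : ℂ) + q.2 * I) (𝓝 0) (𝓝 0) :=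
      Continuous.tendsto' (by fun_prop) 0 0 (by simp)
    filter_upwards [hρ.eventually h0] with q hq
    convert hq using 2
    simp [hΦ_def, conj_ofReal, sub_eq_add_neg]
  set Ψ : ℂ × ℂ → ℂ × ℂ := fun p => ((p.1 + p.2) / 2, (p.1 - p.2) * I / 2) with hΨ_def
  have hΨ : Tendsto Ψ (𝓝 0) (𝓝 0) := Continuous.tendsto' (by fun_prop) 0 0 (by simp [hΨ_def])
  have hΦΨ (p : ℂ × ℂ) : Φ (Ψ p) = p := by
    simp only [hΦ_def, hΨ_def]
    ext
    · linear_combination -(p.1 - p.2) / 2 * I_mul_I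
    · linear_combination (p.1 - p.2) / 2 * I_mul_I
  filter_upwards [hΨ.eventually hGΦ] with p hp
  rwa [hΦΨ] at hp

theorem eventually_sum_mul_conj_eq_zero {ι : Type*} [Fintype ι] {U : Set ℂ} (hU : IsOpen U)
    (h0 : 0 ∈ U) {g : ι → ℂ → ℂ} (hg : ∀ i, DifferentiableOn ℂ (g i) U) (c : ι → ℝ)
    (hsum : ∀ z ∈ U, ∑ i, c i * ‖g i z‖ ^ 2 = 0) :
    ∀ᶠ p : ℂ × ℂ in 𝓝 0, ∑ i, c i * conj (g i (conj p.1)) * g i p.2 = 0 := by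
  have hUU : ∀ᶠ p : ℂ × ℂ in 𝓝 0, conj p.1 ∈ U ∧ p.2 ∈ U := by
    have : Tendsto (fun p : ℂ × ℂ => (conj p.1, p.2)) (𝓝 0) (𝓝 (0, 0)) :=
      Continuous.tendsto' (by fun_prop) 0 (0, 0) (by simp)
    exact this.eventually (prod_mem_nhds (hU.mem_nhds h0) (hU.mem_nhds h0))
  refine eventually_eq_zero_of_conj_diag_eq_zero (hUU.mono fun p ⟨hp₁, hp₂⟩ => ?_) ?_
  · have hrefl (i : ι) : DifferentiableAt ℂ (fun w => conj (g i (conj w))) p.1 :=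
      differentiableAt_conj_conj_iff.2 ((hg i).differentiableAt (hU.mem_nhds hp₁))
    exact DifferentiableAt.fun_sum fun i _ =>
      ((differentiableAt_const _).mul ((hrefl i).comp p differentiableAt_fst)).mul
        (((hg i).differentiableAt (hU.mem_nhds hp₂)).comp p differentiableAt_snd)
  · filter_upwards [hU.mem_nhds h0] with z hz
    simp only [conj_conj, mul_assoc, conj_mul']
    exact_mod_cast hsum z hz

theorem not_linearIndependent_of_sum_mul_norm_sq_eq_zero {ι : Type*} [Fintype ι] [Nonempty ι]
    {U : Set ℂ} (hU : IsOpen U) (hU' : IsPreconnected U) (h0 : 0 ∈ U) {g : ι → ℂ → ℂ}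
    (hg : ∀ i, DifferentiableOn ℂ (g i) U) {c : ι → ℝ} (hc : ∀ i, c i ≠ 0)
    (hsum : ∀ z ∈ U, ∑ i, c i * ‖g i z‖ ^ 2 = 0) :
    ¬ LinearIndependent ℂ (fun i (z : U) => g i z) := by
  intro hli
  have eqOn_zero {F : ℂ → ℂ} (hF : DifferentiableOn ℂ F U) (hF0 : F =ᶠ[𝓝 0] 0) : EqOn F 0 U :=
    (hF.analyticOnNhd hU).eqOn_zero_of_preconnected_of_eventuallyEq_zero hU' h0 hF0
  have hcoeff : ∀ᶠ w in 𝓝 0, ∀ i, c i * conj (g i (conj w)) = 0 := by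
    have hker := eventually_sum_mul_conj_eq_zero hU h0 hg c hsum
    rw [← Prod.mk_zero_zero, nhds_prod_eq] at hker
    filter_upwards [hker.curry] with w hw
    have hrel : EqOn (fun z => ∑ i, c i * conj (g i (conj w)) * g i z) 0 U :=
      eqOn_zero (DifferentiableOn.fun_sum fun i _ => (differentiableOn_const _).mul (hg i)) hw
    refine Fintype.linearIndependent_iff.1 hli _ (funext fun z => ?_)
    simpa [Finset.sum_apply] using hrel z.2
  obtain ⟨i⟩ := ‹Nonempty ι›
  have hgi : g i =ᶠ[𝓝 0] 0 := by
    have hconj : Tendsto conj (𝓝 (0 : ℂ)) (𝓝 0) :=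
      Continuous.tendsto' continuous_conj 0 0 (map_zero _)
    filter_upwards [hconj.eventually hcoeff] with z hz
    simpa [hc i] using hz i
  exact hli.ne_zero i (funext fun z => eqOn_zero (hg i) hgi z.2)

/-- If `f₁,…,fₙ` and `h₁,…,hₘ` are holomorphic on the open unit disk with
`∑ |f_j|² = ∑ |h_k|²` there, and `n + m ≥ 1`, then the family `f₁,…,fₙ,h₁,…,hₘ`
(restricted to the disk) is linearly dependent over `ℂ`. -/
theorem stmt0 (n m : ℕ) (hnm : 1 ≤ n + m)
    (f : Fin n → ℂ → ℂ) (h : Fin m → ℂ → ℂ)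
    (hf : ∀ j, DifferentiableOn ℂ (f j) (Metric.ball (0 : ℂ) 1))
    (hh : ∀ k, DifferentiableOn ℂ (h k) (Metric.ball (0 : ℂ) 1))
    (heq : ∀ z ∈ Metric.ball (0 : ℂ) 1,
      ∑ j, ‖f j z‖ ^ 2 = ∑ k, ‖h k z‖ ^ 2) :
    ¬ LinearIndependent ℂ
      (fun i : Fin n ⊕ Fin m => fun z : Metric.ball (0 : ℂ) 1 =>
        Sum.elim (fun j => f j z.1) (fun k => h k z.1) i) := by
  have : Nonempty (Fin n ⊕ Fin m) := Fintype.card_pos_iff.1 <| by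
    rw [Fintype.card_sum, Fintype.card_fin, Fintype.card_fin]
    omega
  have hfamily : (fun i : Fin n ⊕ Fin m => fun z : ball (0 : ℂ) 1 =>
      Sum.elim (fun j => f j z.1) (fun k => h k z.1) i) =
      fun i (z : ball (0 : ℂ) 1) => Sum.elim f h i z := by
    ext (_ | _) <;> rfl
  rw [hfamily]
  refine not_linearIndependent_of_sum_mul_norm_sq_eq_zero isOpen_ball
    (convex_ball 0 1).isPreconnected (mem_ball_self one_pos) (c := Sum.elim 1 (-1)) ?_ ?_ ?_
  · rintro (j | k)
    exacts [hf j, hh k]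
  · rintro (j | k) <;> simp
  · intro z hz
    simp [Fintype.sum_sum_type, heq z hz]
end

section
/- Let c : ℕ × ℕ → ℂ. Suppose that for every z in the open unit disk {z ∈ ℂ : |z| < 1} the family (r,s) ↦ c(r,s)·z^r·(conj z)^s is summable and its sum ∑_{r,s} c(r,s) z^r (conj z)^s equals 0. Then c(r,s) = 0 for all r and s. -/
/-!
On the circle `z = ρ e^{iθ}` the series becomes `∑ c(r,s) ρ^(r+s) e^{i(r-s)θ}`, an absolutely
convergent Fourier series in `θ` that vanishes identically, so integrating against `e^{-idθ}`
shows that each line `r - s = d` contributes zero: `∑ₖ c(k + d⁺, k + d⁻) (ρ²)ᵏ = 0` for all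
`0 < ρ < 1`. A power series vanishing on an interval `(0, ε)` has zero coefficients, by the
isolated zeros principle.
-/

open Complex ComplexConjugate Filter Set Topology

theorem integral_exp_int_mul_I (k : ℤ) :
    ∫ θ in (0 : ℝ)..2 * Real.pi, cexp (k * θ * I) = if k = 0 then 2 * Real.pi else 0 := by
  split_ifs with hk
  · simp [hk]
  · have hkI : (k : ℂ) * I ≠ 0 := by simp [hk]
    simp_rw [mul_right_comm _ _ I]
    rw [integral_exp_mul_complex hkI]
    have : (k : ℂ) * I * ((2 * Real.pi : ℝ) : ℂ) = k * (2 * Real.pi * I) := by push_cast; ring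
    rw [this, exp_int_mul_two_pi_mul_I]
    simp

theorem norm_exp_int_mul_ofReal_mul_I (k : ℤ) (θ : ℝ) : ‖cexp (k * θ * I)‖ = 1 := by
  simp [norm_exp]

theorem hasSum_indicator_eq_zero_of_tsum_mul_exp_eq_zero {ι : Type*} [Countable ι] {b : ι → ℂ}
    (hb : Summable b) (m : ι → ℤ) (h : ∀ θ : ℝ, ∑' i, b i * cexp (m i * θ * I) = 0) (n : ℤ) :
    HasSum ({i | m i = n}.indicator b) 0 := by
  set F : ι → ℝ → ℂ := fun i θ => b i * cexp (m i * θ * I) * cexp (-(n * θ * I))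
  have hF : ∀ i θ, F i θ = b i * cexp ((m i - n : ℤ) * θ * I) := fun i θ => by
    simp only [F, mul_assoc, ← exp_add]
    push_cast
    ring_nf
  have hnorm : ∀ i θ, ‖F i θ‖ = ‖b i‖ := fun i θ => by
    rw [hF, norm_mul, norm_exp_int_mul_ofReal_mul_I, mul_one]
  have hsum_integral := intervalIntegral.hasSum_integral_of_dominated_convergence
    (a := 0) (b := 2 * Real.pi) (μ := MeasureTheory.volume) (f := fun _ => (0 : ℂ))
    (F := F) (fun i _ => ‖b i‖)
    (fun i => (by fun_prop : Continuous (F i)).aestronglyMeasurable)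
    (fun i => .of_forall fun θ _ => (hnorm i θ).le)
    (.of_forall fun _ _ => hb.norm) intervalIntegrable_const
    (.of_forall fun θ _ => by
      have hs : Summable (fun i => b i * cexp (m i * θ * I)) :=
        hb.norm.of_norm_bounded fun i => by rw [norm_mul, norm_exp_int_mul_ofReal_mul_I, mul_one]
      simpa [F, h θ] using hs.hasSum.mul_right (cexp (-(n * θ * I))))
  have hint : ∀ i, ∫ θ in (0 : ℝ)..2 * Real.pi, F i θ =
      {i | m i = n}.indicator b i * (2 * Real.pi : ℂ) := fun i => by
    simp_rw [hF, intervalIntegral.integral_const_mul, integral_exp_int_mul_I, sub_eq_zero]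
    by_cases hi : m i = n <;> simp [hi]
  simp_rw [hint, intervalIntegral.integral_zero] at hsum_integral
  rwa [← zero_mul (2 * Real.pi : ℂ), hasSum_mul_right_iff (by simp [Real.pi_ne_zero])]
    at hsum_integral

theorem eq_zero_of_eventually_hasSum_ofReal_pow_eq_zero {a : ℕ → ℂ}
    (h : ∀ᶠ t : ℝ in 𝓝[>] 0, HasSum (fun k => a k * (t : ℂ) ^ k) 0) : a = 0 := by
  obtain ⟨t₀, ht₀, ht₀_pos⟩ := (h.and self_mem_nhdsWithin).exists
  set p := FormalMultilinearSeries.ofScalars ℂ a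
  have hrad : (t₀.toNNReal : ENNReal) ≤ p.radius := by
    refine p.le_radius_of_summable_norm ?_
    simpa [p, norm_mul, abs_of_pos ht₀_pos, ht₀_pos.le] using ht₀.summable.norm
  have hp : HasFPowerSeriesAt (FormalMultilinearSeries.ofScalarsSum a) p 0 :=
    (p.hasFPowerSeriesOnBall (lt_of_lt_of_le (by simpa using ht₀_pos) hrad)).hasFPowerSeriesAt
  by_contra ha
  have hp_ne : p ≠ 0 := fun hp0 => ha <| funext fun k => by
    simpa [p, FormalMultilinearSeries.ofScalars_eq_zero] using congrFun hp0 k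
  have hofReal : Tendsto ((↑) : ℝ → ℂ) (𝓝[>] 0) (𝓝[≠] 0) :=
    tendsto_nhdsWithin_of_tendsto_nhds_of_eventually_within _
      (Complex.continuous_ofReal.tendsto' 0 0 ofReal_zero |>.mono_left nhdsWithin_le_nhds)
      (eventually_nhdsWithin_of_forall fun t ht => by simpa using (ne_of_gt ht))
  have hzero : ∃ᶠ z in 𝓝[≠] (0 : ℂ), FormalMultilinearSeries.ofScalarsSum a z = 0 :=
    hofReal.frequently <| h.frequently.mono fun t ht => by
      simpa [FormalMultilinearSeries.ofScalars_sum_eq] using ht.tsum_eq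
  obtain ⟨z, hz, hz'⟩ := (hzero.and_eventually (hp.locally_ne_zero hp_ne)).exists
  exact hz' hz

def diagLine (d : ℤ) (k : ℕ) : ℕ × ℕ := (k + d.toNat, k + (-d).toNat)

theorem diagLine_injective (d : ℤ) : Function.Injective (diagLine d) := fun k l h => by
  simpa [diagLine] using congrArg Prod.fst h

theorem range_diagLine (d : ℤ) : range (diagLine d) = {p | (p.1 : ℤ) - p.2 = d} := by
  ext ⟨r, s⟩
  simp only [mem_range, diagLine, Prod.mk.injEq, mem_ofPred_eq]
  constructor
  · rintro ⟨k, rfl, rfl⟩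
    omega
  · intro h
    exact ⟨min r s, by omega, by omega⟩

theorem diagLine_sub_min (p : ℕ × ℕ) : diagLine (p.1 - p.2) (min p.1 p.2) = p := by
  ext <;> simp [diagLine] <;> omega

theorem diagLine_fst_add_snd (d : ℤ) (k : ℕ) :
    (diagLine d k).1 + (diagLine d k).2 = 2 * k + d.natAbs := by
  simp only [diagLine]
  omega

theorem ofReal_mul_exp_pow_mul_conj_pow (ρ θ : ℝ) (r s : ℕ) :
    (ρ * cexp (θ * I)) ^ r * conj (ρ * cexp (θ * I)) ^ s =
      (ρ : ℂ) ^ (r + s) * cexp (((r - s : ℤ) : ℂ) * θ * I) := by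
  rw [map_mul, conj_ofReal, ← exp_conj, map_mul, conj_ofReal, conj_I, mul_pow, mul_pow,
    ← exp_nat_mul, ← exp_nat_mul, pow_add]
  push_cast
  rw [show (r - s : ℂ) * θ * I = r * (θ * I) + s * (θ * -I) by ring, exp_add]
  ring

theorem hasSum_diagLine_mul_sq_pow_eq_zero (c : ℕ × ℕ → ℂ)
    (hsum : ∀ z ∈ Metric.ball (0 : ℂ) 1, Summable (fun p : ℕ × ℕ => c p * z ^ p.1 * conj z ^ p.2))
    (hzero : ∀ z ∈ Metric.ball (0 : ℂ) 1, ∑' p : ℕ × ℕ, c p * z ^ p.1 * conj z ^ p.2 = 0)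
    {ρ : ℝ} (hρ₀ : 0 < ρ) (hρ₁ : ρ < 1) (d : ℤ) :
    HasSum (fun k => c (diagLine d k) * ((ρ : ℂ) ^ 2) ^ k) 0 := by
  have hball : ∀ θ : ℝ, (ρ * cexp (θ * I)) ∈ Metric.ball (0 : ℂ) 1 := fun θ => by
    simpa [norm_exp_ofReal_mul_I, abs_of_pos hρ₀] using hρ₁
  set b : ℕ × ℕ → ℂ := fun p => c p * (ρ : ℂ) ^ (p.1 + p.2)
  have hterm : ∀ θ : ℝ, ∀ p : ℕ × ℕ, c p * (ρ * cexp (θ * I)) ^ p.1 * conj (ρ * cexp (θ * I)) ^ p.2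
      = b p * cexp (((p.1 - p.2 : ℤ) : ℂ) * θ * I) := fun θ p => by
    rw [mul_assoc, ofReal_mul_exp_pow_mul_conj_pow, ← mul_assoc]
  have hb : Summable b := by simpa [hterm, b, pow_add, mul_assoc] using hsum _ (hball 0)
  have hline := hasSum_indicator_eq_zero_of_tsum_mul_exp_eq_zero hb (fun p => p.1 - p.2)
    (fun θ => by simpa only [hterm] using hzero _ (hball θ)) d
  rw [← (diagLine_injective d).hasSum_iff fun p hp => indicator_of_notMem
    (by rwa [range_diagLine] at hp) b] at hline
  have hρN : (ρ : ℂ) ^ d.natAbs ≠ 0 := pow_ne_zero _ (ofReal_ne_zero.2 hρ₀.ne')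
  rw [← hasSum_mul_right_iff hρN, zero_mul]
  refine hline.congr_fun fun k => ?_
  rw [Function.comp_apply, indicator_of_mem (by rw [← range_diagLine]; exact mem_range_self k),
    ← pow_mul, mul_assoc, ← pow_add, ← diagLine_fst_add_snd]

/-- Uniqueness of absolutely convergent power series expansions in `z` and
`conj z` on the open unit disk: if `∑ c(r,s) zʳ (conj z)ˢ` is summable with sum `0` for
every `z` in the disk, then all coefficients vanish. -/
theorem stmt1 (c : ℕ × ℕ → ℂ)
    (hsum : ∀ z ∈ Metric.ball (0 : ℂ) 1,
      Summable (fun p : ℕ × ℕ => c p * z ^ p.1 * (starRingEnd ℂ z) ^ p.2))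
    (hzero : ∀ z ∈ Metric.ball (0 : ℂ) 1,
      ∑' p : ℕ × ℕ, c p * z ^ p.1 * (starRingEnd ℂ z) ^ p.2 = 0) :
    ∀ p : ℕ × ℕ, c p = 0 := by
  intro p
  have hline : (fun k => c (diagLine (p.1 - p.2) k)) = 0 := by
    apply eq_zero_of_eventually_hasSum_ofReal_pow_eq_zero
    filter_upwards [Ioo_mem_nhdsGT one_pos] with t ⟨ht₀, ht₁⟩
    have hsqrt : ((√t : ℝ) : ℂ) ^ 2 = t := by rw [← ofReal_pow, Real.sq_sqrt ht₀.le]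
    simpa [hsqrt] using hasSum_diagLine_mul_sq_pow_eq_zero c hsum hzero (Real.sqrt_pos.2 ht₀)
      ((Real.sqrt_lt' one_pos).2 (by simpa using ht₁)) (p.1 - p.2)
  simpa [diagLine_sub_min] using congrFun hline (min p.1 p.2)
end

section
/- Let n ≥ 1, let H be an n × n Hermitian matrix over ℂ, and let f₁, …, fₙ be holomorphic functions on the open unit disk {z ∈ ℂ : |z| < 1} that are linearly independent over ℂ as functions on the disk. If ∑_{j,k} H_{jk} · f_j(z) · conj(f_k(z)) = 0 for every z in the open unit disk, then H = 0. -/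
/-!
Write `g_k = ∑_j H_{jk} f_j`, so the hypothesis says `∑_k g_k(z) conj(f_k(z)) = 0` with all
`g_k`, `f_k` holomorphic. Applying `∂/∂z̄` repeatedly gives `∑_k g_k(z) conj(f_k^{(m)}(z)) = 0`
for every `m`, so for fixed `z` the holomorphic function `w ↦ ∑_k conj(g_k(z)) f_k(w)` vanishes
to infinite order at `z`, hence on the whole disk. Thus `∑_k g_k(z) conj(f_k(w)) = 0` for all
`z, w`, and linear independence of the `f_j` applied twice (in `z`, then in `w`) forces `H = 0`.
-/

open Finset Metric Filter Topology ComplexConjugate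

lemma hasDerivAt_mul_conj_comp_line {g F : ℂ → ℂ} {z : ℂ}
    (hg : DifferentiableAt ℂ g z) (hF : DifferentiableAt ℂ F z) (v : ℂ) :
    HasDerivAt (fun t : ℝ => g (z + t * v) * conj (F (z + t * v)))
      (v * (deriv g z * conj (F z)) + conj v * (g z * conj (deriv F z))) 0 := by
  have hline : HasDerivAt (fun t : ℝ => z + t * v) v 0 := by
    simpa using ((hasDerivAt_id (0 : ℝ)).ofReal_comp.mul_const v).const_add z
  have hgt := hg.hasDerivAt.comp_of_eq 0 hline (by simp)
  have hFt := (hF.hasDerivAt.comp_of_eq 0 hline (by simp)).star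
  refine (hgt.fun_mul hFt).congr_deriv ?_
  simp only [Function.comp_apply, Complex.ofReal_zero, zero_mul, add_zero, star_mul',
    Complex.star_def]
  ring

section

variable {ι : Type*} [Fintype ι]

lemma sum_mul_conj_deriv_eq_zero {g F : ι → ℂ → ℂ} {z : ℂ}
    (hg : ∀ k, DifferentiableAt ℂ (g k) z) (hF : ∀ k, DifferentiableAt ℂ (F k) z)
    (h0 : ∀ᶠ w in 𝓝 z, ∑ k, g k w * conj (F k w) = 0) :
    ∑ k, g k z * conj (deriv (F k) z) = 0 := by
  -- differentiating along the real directions `1` and `I` separates `∂/∂z` from `∂/∂z̄`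
  set A := ∑ k, deriv (g k) z * conj (F k z)
  set B := ∑ k, g k z * conj (deriv (F k) z)
  have key : ∀ v : ℂ, v * A + conj v * B = 0 := by
    intro v
    have hline : Tendsto (fun t : ℝ => z + t * v) (𝓝 0) (𝓝 z) := by
      exact Continuous.tendsto' (by fun_prop) 0 z (by simp)
    have hderiv := HasDerivAt.fun_sum fun k (_ : k ∈ univ) =>
      hasDerivAt_mul_conj_comp_line (hg k) (hF k) v
    have hzero : HasDerivAt (fun t : ℝ => ∑ k, g k (z + t * v) * conj (F k (z + t * v))) 0 0 :=
      (hasDerivAt_const (0 : ℝ) (0 : ℂ)).congr_of_eventuallyEq (hline.eventually h0)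
    rw [← hderiv.unique hzero, sum_add_distrib, ← mul_sum, ← mul_sum]
  have h1 := key 1
  have hI := key Complex.I
  simp only [map_one, Complex.conj_I] at h1 hI
  linear_combination (h1 + Complex.I * hI) / 2 - (A - B) / 2 * Complex.I_sq

lemma sum_mul_conj_iteratedDeriv_eq_zero {g F : ι → ℂ → ℂ} {s : Set ℂ} (hs : IsOpen s)
    (hg : ∀ k, DifferentiableOn ℂ (g k) s) (hF : ∀ k, DifferentiableOn ℂ (F k) s)
    (h0 : ∀ z ∈ s, ∑ k, g k z * conj (F k z) = 0) (m : ℕ) :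
    ∀ z ∈ s, ∑ k, g k z * conj (iteratedDeriv m (F k) z) = 0 := by
  induction m with
  | zero => simpa using h0
  | succ m ih =>
    intro z hz
    simp only [iteratedDeriv_succ, iteratedDeriv_eq_iterate] at ih ⊢
    refine sum_mul_conj_deriv_eq_zero (fun k => (hg k).differentiableAt (hs.mem_nhds hz))
      (fun k => ?_) (eventually_of_mem (hs.mem_nhds hz) ih)
    exact ((hF k).analyticOnNhd hs).iterated_deriv m z hz |>.differentiableAt

lemma sum_mul_conj_eq_zero_of_diagonal {g F : ι → ℂ → ℂ} {U : Set ℂ} (hU : IsOpen U)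
    (hU' : IsPreconnected U)
    (hg : ∀ k, DifferentiableOn ℂ (g k) U) (hF : ∀ k, DifferentiableOn ℂ (F k) U)
    (h0 : ∀ z ∈ U, ∑ k, g k z * conj (F k z) = 0) {z w : ℂ} (hz : z ∈ U) (hw : w ∈ U) :
    ∑ k, g k z * conj (F k w) = 0 := by
  set h : ℂ → ℂ := fun w => ∑ k, conj (g k z) * F k w
  have hh : AnalyticOnNhd ℂ h U :=
    (DifferentiableOn.fun_sum fun k _ => (hF k).const_mul _).analyticOnNhd hU
  have hF' : ∀ k, AnalyticAt ℂ (F k) z := fun k => (hF k).analyticOnNhd hU z hz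
  have hderiv : ∀ m, iteratedDeriv m h z = 0 := by
    intro m
    rw [iteratedDeriv_fun_sum fun k _ => contDiffAt_const.mul (hF' k).contDiffAt,
      sum_congr rfl fun k _ => iteratedDeriv_const_mul _ (hF' k).contDiffAt]
    simpa using congrArg conj (sum_mul_conj_iteratedDeriv_eq_zero hU hg hF h0 m z hz)
  have hnear : h =ᶠ[𝓝 z] 0 := by
    refine analyticOrderAt_eq_top.mp (ENat.eq_top_iff_forall_ge.mpr fun m => ?_)
    exact (natCast_le_analyticOrderAt_iff_iteratedDeriv_eq_zero (hh z hz)).mpr fun i _ => hderiv i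
  have hhw : h w = 0 := hh.eqOn_zero_of_preconnected_of_eventuallyEq_zero hU' hz hnear hw
  simpa [h, mul_comm] using congrArg conj hhw

end

theorem stmt2_general (n : ℕ) (H : Matrix (Fin n) (Fin n) ℂ)
    (f : Fin n → ℂ → ℂ)
    (hf : ∀ j, DifferentiableOn ℂ (f j) (Metric.ball (0 : ℂ) 1))
    (hind : LinearIndependent ℂ (fun j : Fin n => fun z : Metric.ball (0 : ℂ) 1 => f j z.1))
    (heq : ∀ z ∈ Metric.ball (0 : ℂ) 1,
      ∑ j, ∑ k, H j k * f j z * starRingEnd ℂ (f k z) = 0) :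
    H = 0 := by
  have hpolar : ∀ z ∈ ball (0 : ℂ) 1, ∀ w ∈ ball (0 : ℂ) 1,
      ∑ k, (∑ j, H j k * f j z) * conj (f k w) = 0 := fun z hz w hw =>
    sum_mul_conj_eq_zero_of_diagonal isOpen_ball (convex_ball 0 1).isPreconnected
      (fun k => DifferentiableOn.fun_sum fun j _ => (hf j).const_mul (H j k)) hf
      (fun z hz => by simp only [sum_mul]; rw [sum_comm]; exact heq z hz) hz hw
  have hrow : ∀ w ∈ ball (0 : ℂ) 1, ∀ j, ∑ k, H j k * conj (f k w) = 0 := fun w hw =>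
    Fintype.linearIndependent_iff.mp hind _ <| funext fun z => by
      simp only [Finset.sum_apply, Pi.smul_apply, smul_eq_mul, sum_mul, Pi.zero_apply]
      rw [sum_comm]
      refine Eq.trans ?_ (hpolar z z.2 w hw)
      simp only [sum_mul]
      exact sum_congr rfl fun k _ => sum_congr rfl fun j _ => by ring
  ext j k
  have hconj := Fintype.linearIndependent_iff.mp hind (fun k => conj (H j k)) <| funext fun w => by
    simpa [mul_comm] using congrArg conj (hrow w w.2 j)
  simpa using hconj k

/-- If `H` is an `n × n` Hermitian matrix (`n ≥ 1`) and `f₁,…,fₙ` are holomorphic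
and linearly independent on the open unit disk with `∑_{j,k} H_{jk} f_j(z) conj(f_k(z)) = 0`
for every `z` in the disk, then `H = 0`. -/
theorem stmt2 (n : ℕ) (hn : 1 ≤ n) (H : Matrix (Fin n) (Fin n) ℂ)
    (hH : H.IsHermitian)
    (f : Fin n → ℂ → ℂ)
    (hf : ∀ j, DifferentiableOn ℂ (f j) (Metric.ball (0 : ℂ) 1))
    (hind : LinearIndependent ℂ (fun j : Fin n => fun z : Metric.ball (0 : ℂ) 1 => f j z.1))
    (heq : ∀ z ∈ Metric.ball (0 : ℂ) 1,
      ∑ j, ∑ k, H j k * f j z * starRingEnd ℂ (f k z) = 0) :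
    H = 0 :=
  stmt2_general n H f hf hind heq
end
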